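/- Let (H, φ, S, α, β) be a quasi-Hopf algebra and K ⊆ H a finite-dimensional subquasibialgebra (i.e., a subalgebra with Δ(K) ⊆ K⊗K and φ ∈ K⊗K⊗K) satisfying S(φ⁻¹⁽¹⁾)·α·φ⁻¹⁽²⁾ ⊗ φ⁻¹⁽³⁾ ∈ K⊗K. Then S(K) ⊆ K and α, β ∈ K, so K is a quasi-Hopf subalgebra of H. -/

import Mathlib

open TensorProduct LinearMap

/-- A quasibialgebra over a field `k`. -/
structure QuasiBialgebra (k : Type*) [Field k] (H : Type*) [Ring H] [Algebra k H] where
  comul : H →ₐ[k] H ⊗[k] H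
  counit : H →ₐ[k] k
  assoc : H ⊗[k] (H ⊗[k] H)
  assocInv : H ⊗[k] (H ⊗[k] H)
  assoc_mul_inv : assoc * assocInv = 1
  inv_mul_assoc : assocInv * assoc = 1
  counit_comul_left : ∀ h : H,
    (TensorProduct.lid k H) ((LinearMap.rTensor H counit.toLinearMap) (comul h)) = h
  counit_comul_right : ∀ h : H,
    (TensorProduct.rid k H) ((LinearMap.lTensor H counit.toLinearMap) (comul h)) = h
  quasi_coassoc : ∀ h : H,
    (Algebra.TensorProduct.map (AlgHom.id k H) comul) (comul h) * assoc
      = assoc * (Algebra.TensorProduct.assoc k k k H H H)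
          ((Algebra.TensorProduct.map comul (AlgHom.id k H)) (comul h))
  pentagon :
    (Algebra.TensorProduct.map (AlgHom.id k H)
        (Algebra.TensorProduct.map (AlgHom.id k H) comul)) assoc
      * (Algebra.TensorProduct.assoc k k k H H (H ⊗[k] H))
          ((Algebra.TensorProduct.map comul (AlgHom.id k (H ⊗[k] H))) assoc)
    = (1 : H) ⊗ₜ[k] assoc
      * (Algebra.TensorProduct.map (AlgHom.id k H)
          ((Algebra.TensorProduct.assoc k k k H H H).toAlgHom.comp
            (Algebra.TensorProduct.map comul (AlgHom.id k H)))) assoc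
      * (Algebra.TensorProduct.map (AlgHom.id k H)
          (Algebra.TensorProduct.assoc k k k H H H).toAlgHom)
          ((Algebra.TensorProduct.assoc k k k H (H ⊗[k] H) H) (assoc ⊗ₜ[k] (1 : H)))
  counit_mid :
    (Algebra.TensorProduct.map (AlgHom.id k H)
        ((Algebra.TensorProduct.lid k H).toAlgHom.comp
          (Algebra.TensorProduct.map counit (AlgHom.id k H)))) assoc = 1

variable {k : Type*} [Field k] {H : Type*} [Ring H] [Algebra k H]

/-- The quasi-antipode axioms for a quasibialgebra. -/
structure IsQuasiAntipode (qb : QuasiBialgebra k H) (S : H →ₗ[k] H) (α β : H) : Prop where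
  map_one : S 1 = 1
  map_mul : ∀ a b : H, S (a * b) = S b * S a
  antipode_left : ∀ h : H,
    LinearMap.mul' k H ((TensorProduct.map (LinearMap.mulRight k α ∘ₗ S) LinearMap.id)
      (qb.comul h)) = qb.counit h • α
  antipode_right : ∀ h : H,
    LinearMap.mul' k H ((TensorProduct.map LinearMap.id (LinearMap.mulLeft k β ∘ₗ S))
      (qb.comul h)) = qb.counit h • β
  assoc_antipode :
    LinearMap.mul' k H ((TensorProduct.map (LinearMap.mulRight k β)
        (LinearMap.mul' k H ∘ₗ TensorProduct.map (LinearMap.mulRight k α ∘ₗ S) LinearMap.id))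
      qb.assoc) = 1
  assocInv_antipode :
    LinearMap.mul' k H ((TensorProduct.map (LinearMap.mulRight k α ∘ₗ S)
        (LinearMap.mul' k H ∘ₗ TensorProduct.map (LinearMap.mulRight k β) S))
      qb.assocInv) = 1

/-- A quasi-Hopf algebra. -/
structure QuasiHopf (k : Type*) [Field k] (H : Type*) [Ring H] [Algebra k H]
    extends QuasiBialgebra k H where
  antipode : H →ₗ[k] H
  alpha : H
  beta : H
  isQuasiAntipode : IsQuasiAntipode toQuasiBialgebra antipode alpha beta

/-- The element `w = Σ S(φ⁻¹⁽¹⁾)·α·φ⁻¹⁽²⁾ ⊗ φ⁻¹⁽³⁾` of `H ⊗ H`. -/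
noncomputable def drinfeldW (qh : QuasiHopf k H) : H ⊗[k] H :=
  (LinearMap.rTensor H
      (LinearMap.mul' k H ∘ₗ
        TensorProduct.map (LinearMap.mulRight k qh.alpha ∘ₗ qh.antipode) LinearMap.id))
    ((TensorProduct.assoc k H H H).symm qh.assocInv)

/-- Drinfeld's canonical map `g ⊗ h ↦ g·S(φ⁻¹⁽¹⁾)·α·φ⁻¹⁽²⁾·h₍₁₎ ⊗ φ⁻¹⁽³⁾·h₍₂₎`. -/
noncomputable def drinfeldCan (qh : QuasiHopf k H) : H ⊗[k] H →ₗ[k] H ⊗[k] H :=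
  LinearMap.rTensor H (LinearMap.mul' k H)
    ∘ₗ (TensorProduct.assoc k H H H).symm.toLinearMap
    ∘ₗ LinearMap.lTensor H (LinearMap.mulLeft k (drinfeldW qh) ∘ₗ qh.comul.toLinearMap)

/-- `h ↦ Σ φ⁽¹⁾·β·S(h₍₁₎·φ⁽²⁾) ⊗ h₍₂₎·φ⁽³⁾`. -/
noncomputable def drinfeldInvAux (qh : QuasiHopf k H) : H →ₗ[k] H ⊗[k] H :=
  LinearMap.rTensor H
      (LinearMap.mul' k H ∘ₗ TensorProduct.map (LinearMap.mulRight k qh.beta) qh.antipode)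
    ∘ₗ (TensorProduct.assoc k H H H).symm.toLinearMap
    ∘ₗ LinearMap.mulRight k qh.assoc
    ∘ₗ (TensorProduct.mk k H (H ⊗[k] H)) 1
    ∘ₗ qh.comul.toLinearMap

/-- The inverse of Drinfeld's canonical map:
`g ⊗ h ↦ g·φ⁽¹⁾·β·S(h₍₁₎·φ⁽²⁾) ⊗ h₍₂₎·φ⁽³⁾`. -/
noncomputable def drinfeldCanInv (qh : QuasiHopf k H) : H ⊗[k] H →ₗ[k] H ⊗[k] H :=
  LinearMap.rTensor H (LinearMap.mul' k H)
    ∘ₗ (TensorProduct.assoc k H H H).symm.toLinearMap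
    ∘ₗ LinearMap.lTensor H (drinfeldInvAux qh)

/-!
Drinfeld's canonical map `T (g ⊗ h) = (g ⊗ 1) · w · Δ h` has the left inverse
`T' (g ⊗ h) = (g ⊗ 1) · φ⁽¹⁾ β S(h₍₁₎ φ⁽²⁾) ⊗ h₍₂₎ φ⁽³⁾`: by quasi-coassociativity
`T' ((1 ⊗ d) · Δ c) = T' (1 ⊗ d) · (1 ⊗ c)`, and the pentagon gives `T' w = 1`.
Since `w ∈ K ⊗ K` and `Δ K ⊆ K ⊗ K`, `T` maps the image `M` of `K ⊗ K` in `H ⊗ H` into itself;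
`M` is finite-dimensional and `T` is injective, so `T` permutes `M` and `T'` preserves `M`.
Hence `T' (1 ⊗ b) ∈ M` for `b ∈ K`, and applying `id ⊗ ε` gives `β S(b) ∈ K`, so `β ∈ K`.
Likewise `α = (id ⊗ ε) w ∈ K`, and `S x = Σ w⁽¹⁾ β S(x w⁽²⁾) ∈ K` for `x ∈ K`.
-/

namespace Algebra.TensorProduct

/- On `H ⊗ (H ⊗ (H ⊗ H))` the generic ring lemmas do not fire: the multiplication found there is
not recognised as the one of the `Semiring` structure. Restated for an abstract `A ⊗[R] B`, they
unify with it. -/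

variable {R A B : Type*} [CommSemiring R] [Semiring A] [Semiring B] [Algebra R A] [Algebra R B]

theorem zero_mul' (x : A ⊗[R] B) : 0 * x = 0 := zero_mul x

theorem mul_zero' (x : A ⊗[R] B) : x * 0 = 0 := mul_zero x

theorem add_mul' (x y z : A ⊗[R] B) : (x + y) * z = x * z + y * z := add_mul x y z

theorem mul_add' (x y z : A ⊗[R] B) : x * (y + z) = x * y + x * z := mul_add x y z

theorem sum_mul' {ι : Type*} (s : Finset ι) (f : ι → A ⊗[R] B) (y : A ⊗[R] B) :
    (∑ i ∈ s, f i) * y = ∑ i ∈ s, f i * y := Finset.sum_mul s f y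

theorem mul_sum' {ι : Type*} (s : Finset ι) (f : ι → A ⊗[R] B) (y : A ⊗[R] B) :
    y * ∑ i ∈ s, f i = ∑ i ∈ s, y * f i := Finset.mul_sum s f y

theorem one_mul' (x : A ⊗[R] B) : 1 * x = x := one_mul x

theorem mul_one' (x : A ⊗[R] B) : x * 1 = x := mul_one x

theorem smul_mul_assoc' (c : R) (x y : A ⊗[R] B) : c • x * y = c • (x * y) := smul_mul_assoc c x y

theorem mul_smul_comm' (c : R) (x y : A ⊗[R] B) : x * c • y = c • (x * y) := mul_smul_comm c x y

theorem algHom_ext_threefold {C D : Type*} [Semiring C] [Semiring D] [Algebra R C] [Algebra R D]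
    {f g : A ⊗[R] (B ⊗[R] C) →ₐ[R] D}
    (h : ∀ a b c, f (a ⊗ₜ (b ⊗ₜ c)) = g (a ⊗ₜ (b ⊗ₜ c))) : f = g :=
  AlgHom.toLinearMap_injective (TensorProduct.ext_threefold' h)

end Algebra.TensorProduct

namespace TensorProduct

variable {R M N P Q : Type*} [CommSemiring R] [AddCommMonoid M] [AddCommMonoid N]
  [AddCommMonoid P] [AddCommMonoid Q] [Module R M] [Module R N] [Module R P] [Module R Q]

theorem exists_fin_sum_tmul (t : M ⊗[R] N) :
    ∃ (n : ℕ) (a : Fin n → M) (b : Fin n → N), t = ∑ i, a i ⊗ₜ[R] b i := by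
  induction t using TensorProduct.induction_on with
  | zero => exact ⟨0, ![], ![], by simp⟩
  | tmul a b => exact ⟨1, fun _ => a, fun _ => b, by simp⟩
  | add x y hx hy =>
    obtain ⟨n, a, b, rfl⟩ := hx
    obtain ⟨m, c, d, rfl⟩ := hy
    exact ⟨n + m, Fin.append a c, Fin.append b d, by simp [Fin.sum_univ_add]⟩

theorem exists_fin_sum_tmul_tmul (t : M ⊗[R] (N ⊗[R] P)) :
    ∃ (n : ℕ) (a : Fin n → M) (b : Fin n → N) (c : Fin n → P),
      t = ∑ i, a i ⊗ₜ[R] (b i ⊗ₜ[R] c i) := by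
  induction t using TensorProduct.induction_on with
  | zero => exact ⟨0, ![], ![], ![], by simp⟩
  | tmul a t =>
    obtain ⟨n, b, c, rfl⟩ := exists_fin_sum_tmul t
    exact ⟨n, fun _ => a, b, c, tmul_sum _ _ _⟩
  | add x y hx hy =>
    obtain ⟨n, a, b, c, rfl⟩ := hx
    obtain ⟨m, a', b', c', rfl⟩ := hy
    exact ⟨n + m, Fin.append a a', Fin.append b b', Fin.append c c', by simp [Fin.sum_univ_add]⟩

theorem induction_on_threefold {motive : M ⊗[R] (N ⊗[R] P) → Prop} (t : M ⊗[R] (N ⊗[R] P))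
    (zero : motive 0) (tmul : ∀ x y z, motive (x ⊗ₜ[R] (y ⊗ₜ[R] z)))
    (add : ∀ u v, motive u → motive v → motive (u + v)) : motive t := by
  obtain ⟨n, a, b, c, rfl⟩ := exists_fin_sum_tmul_tmul t
  exact Finset.sum_induction _ motive add zero fun i _ => tmul _ _ _

theorem induction_on_fourfold {motive : M ⊗[R] (N ⊗[R] (P ⊗[R] Q)) → Prop}
    (t : M ⊗[R] (N ⊗[R] (P ⊗[R] Q))) (zero : motive 0)
    (tmul : ∀ w x y z, motive (w ⊗ₜ[R] (x ⊗ₜ[R] (y ⊗ₜ[R] z))))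
    (add : ∀ u v, motive u → motive v → motive (u + v)) : motive t := by
  induction t using induction_on_threefold with
  | zero => exact zero
  | add u v hu hv => exact add u v hu hv
  | tmul w x t =>
    induction t using TensorProduct.induction_on with
    | zero => simpa using zero
    | tmul y z => exact tmul w x y z
    | add s s' hs hs' => simpa [tmul_add] using add _ _ hs hs'

end TensorProduct

theorem mul_eq_mul_of_mul_eq_mul_mul {M : Type*} [Monoid M] {a a' b c d d' e e' : M}
    (ha : a' * a = 1) (hd : d * d' = 1) (he : e * e' = 1) (h : a * b = c * d * e) :
    a' * c = b * (e' * d') := by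
  have hc : c * d * e * (e' * d') = c := by
    rw [mul_assoc, ← mul_assoc e, he, one_mul, mul_assoc, hd, mul_one]
  calc a' * c = a' * (a * b * (e' * d')) := by rw [h, hc]
    _ = b * (e' * d') := by simp only [← mul_assoc, ha, one_mul]

theorem Submodule.mem_of_leftInverse {K V : Type*} [DivisionRing K] [AddCommGroup V] [Module K V]
    {f g : V →ₗ[K] V} (hgf : Function.LeftInverse g f) {p : Submodule K V}
    [FiniteDimensional K p] (hf : ∀ x ∈ p, f x ∈ p) {x : V} (hx : x ∈ p) : g x ∈ p := by
  obtain ⟨y, hy, rfl⟩ := (LinearMap.injOn_iff_surjOn hf).1 hgf.injective.injOn hx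
  rwa [hgf y]

namespace QuasiBialgebra

variable (qb : QuasiBialgebra k H)

open Algebra.TensorProduct

noncomputable def counitLeft (B : Type*) [Semiring B] [Algebra k B] : H ⊗[k] B →ₐ[k] B :=
  (Algebra.TensorProduct.lid k B).toAlgHom.comp
    (Algebra.TensorProduct.map qb.counit (AlgHom.id k B))

noncomputable def counitRight (B : Type*) [Semiring B] [Algebra k B] : B ⊗[k] H →ₐ[k] B :=
  (Algebra.TensorProduct.rid k k B).toAlgHom.comp
    (Algebra.TensorProduct.map (AlgHom.id k B) qb.counit)

@[simp] theorem counitLeft_tmul {B : Type*} [Semiring B] [Algebra k B] (a : H) (b : B) :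
    qb.counitLeft B (a ⊗ₜ b) = qb.counit a • b := by
  simp [counitLeft]

@[simp] theorem counitRight_tmul {B : Type*} [Semiring B] [Algebra k B] (b : B) (a : H) :
    qb.counitRight B (b ⊗ₜ a) = qb.counit a • b := by
  simp [counitRight]

theorem counitLeft_comul (h : H) : qb.counitLeft H (qb.comul h) = h := qb.counit_comul_left h

theorem counitRight_comul (h : H) : qb.counitRight H (qb.comul h) = h := qb.counit_comul_right h

noncomputable def counitMid : H ⊗[k] (H ⊗[k] H) →ₐ[k] H ⊗[k] H :=
  Algebra.TensorProduct.map (AlgHom.id k H) (qb.counitLeft H)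

theorem counitMid_assoc : qb.counitMid qb.assoc = 1 := qb.counit_mid

theorem isUnit_assoc : IsUnit qb.assoc :=
  ⟨⟨qb.assoc, qb.assocInv, qb.assoc_mul_inv, qb.inv_mul_assoc⟩, rfl⟩

theorem map_assoc_mul_map_assocInv {B : Type*} [Semiring B] [Algebra k B]
    (f : H ⊗[k] (H ⊗[k] H) →ₐ[k] B) : f qb.assoc * f qb.assocInv = 1 := by
  rw [← map_mul, qb.assoc_mul_inv, map_one]

theorem map_assocInv_mul_map_assoc {B : Type*} [Semiring B] [Algebra k B]
    (f : H ⊗[k] (H ⊗[k] H) →ₐ[k] B) : f qb.assocInv * f qb.assoc = 1 := by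
  rw [← map_mul, qb.inv_mul_assoc, map_one]

theorem map_assocInv_eq_one {B : Type*} [Semiring B] [Algebra k B]
    {f : H ⊗[k] (H ⊗[k] H) →ₐ[k] B} (h : f qb.assoc = 1) : f qb.assocInv = 1 := by
  simpa [h] using qb.map_assoc_mul_map_assocInv f

noncomputable def counitLast : H ⊗[k] (H ⊗[k] H) →ₐ[k] H ⊗[k] H :=
  Algebra.TensorProduct.map (AlgHom.id k H) (qb.counitRight H)

noncomputable def idIdComul : H ⊗[k] (H ⊗[k] H) →ₐ[k] H ⊗[k] (H ⊗[k] (H ⊗[k] H)) :=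
  Algebra.TensorProduct.map (AlgHom.id k H) (Algebra.TensorProduct.map (AlgHom.id k H) qb.comul)

noncomputable def comulIdId : H ⊗[k] (H ⊗[k] H) →ₐ[k] H ⊗[k] (H ⊗[k] (H ⊗[k] H)) :=
  (Algebra.TensorProduct.assoc k k k H H (H ⊗[k] H)).toAlgHom.comp
    (Algebra.TensorProduct.map qb.comul (AlgHom.id k (H ⊗[k] H)))

noncomputable def idComulId : H ⊗[k] (H ⊗[k] H) →ₐ[k] H ⊗[k] (H ⊗[k] (H ⊗[k] H)) :=
  Algebra.TensorProduct.map (AlgHom.id k H)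
    ((Algebra.TensorProduct.assoc k k k H H H).toAlgHom.comp
      (Algebra.TensorProduct.map qb.comul (AlgHom.id k H)))

noncomputable def tmulOne : H ⊗[k] (H ⊗[k] H) →ₐ[k] H ⊗[k] (H ⊗[k] (H ⊗[k] H)) :=
  (Algebra.TensorProduct.map (AlgHom.id k H)
      (Algebra.TensorProduct.assoc k k k H H H).toAlgHom).comp
    ((Algebra.TensorProduct.assoc k k k H (H ⊗[k] H) H).toAlgHom.comp
      Algebra.TensorProduct.includeLeft)

theorem pentagon' : qb.idIdComul qb.assoc * qb.comulIdId qb.assoc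
    = Algebra.TensorProduct.includeRight qb.assoc * qb.idComulId qb.assoc * tmulOne qb.assoc :=
  qb.pentagon

noncomputable def counitFirstTwo : H ⊗[k] (H ⊗[k] (H ⊗[k] H)) →ₐ[k] H ⊗[k] H :=
  (qb.counitLeft (H ⊗[k] H)).comp (qb.counitLeft (H ⊗[k] (H ⊗[k] H)))

noncomputable def counitLastTwo : H ⊗[k] (H ⊗[k] (H ⊗[k] H)) →ₐ[k] H ⊗[k] H :=
  qb.counitLast.comp (Algebra.TensorProduct.map (AlgHom.id k H)
    (Algebra.TensorProduct.map (AlgHom.id k H) (qb.counitRight H)))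

@[simp] theorem counitMid_tmul (a : H) (s : H ⊗[k] H) :
    qb.counitMid (a ⊗ₜ s) = a ⊗ₜ qb.counitLeft H s := rfl

@[simp] theorem counitLast_tmul (a : H) (s : H ⊗[k] H) :
    qb.counitLast (a ⊗ₜ s) = a ⊗ₜ qb.counitRight H s := rfl

@[simp] theorem counitFirstTwo_tmul (a b : H) (t : H ⊗[k] H) :
    qb.counitFirstTwo (a ⊗ₜ (b ⊗ₜ t)) = (qb.counit a * qb.counit b) • t := by
  simp [counitFirstTwo, smul_smul]

@[simp] theorem counitLastTwo_tmul (a b c d : H) :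
    qb.counitLastTwo (a ⊗ₜ (b ⊗ₜ (c ⊗ₜ d))) = (qb.counit c * qb.counit d) • (a ⊗ₜ b) := by
  simp [counitLastTwo, smul_smul, mul_comm]

theorem counitFirstTwo_assoc (s t : H ⊗[k] H) :
    qb.counitFirstTwo (Algebra.TensorProduct.assoc k k k H H (H ⊗[k] H) (s ⊗ₜ t))
      = qb.counit (qb.counitLeft H s) • t := by
  induction s using TensorProduct.induction_on with
  | zero => simp
  | tmul a b => simp
  | add x y hx hy => simp only [add_tmul, map_add, hx, hy, add_smul]

theorem counitLastTwo_assoc (s : H ⊗[k] H) (b c : H) :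
    qb.counitLastTwo (Algebra.TensorProduct.assoc k k k H H (H ⊗[k] H) (s ⊗ₜ (b ⊗ₜ c)))
      = (qb.counit b * qb.counit c) • s := by
  induction s using TensorProduct.induction_on with
  | zero => simp
  | tmul a b => simp
  | add x y hx hy => simp only [add_tmul, map_add, hx, hy, smul_add]

theorem counitLeft_assoc_tmul (s : H ⊗[k] H) (c : H) :
    qb.counitLeft (H ⊗[k] H) (Algebra.TensorProduct.assoc k k k H H H (s ⊗ₜ c))
      = qb.counitLeft H s ⊗ₜ c := by
  induction s using TensorProduct.induction_on with
  | zero => simp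
  | tmul a b => simp [smul_tmul']
  | add x y hx hy => simp only [add_tmul, map_add, hx, hy]

theorem counitRight_assoc_tmul (s : H ⊗[k] H) (c : H) :
    Algebra.TensorProduct.map (AlgHom.id k H) (qb.counitRight H)
        (Algebra.TensorProduct.assoc k k k H H H (s ⊗ₜ c)) = qb.counit c • s := by
  induction s using TensorProduct.induction_on with
  | zero => simp
  | tmul a b => simp [smul_tmul']
  | add x y hx hy => simp only [add_tmul, map_add, hx, hy, smul_add]

theorem counitFirstTwo_comp_idIdComul :
    qb.counitFirstTwo.comp qb.idIdComul
      = qb.comul.comp ((qb.counitLeft H).comp qb.counitMid) :=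
  algHom_ext_threefold fun a b c => by simp [idIdComul, smul_smul, mul_comm]

theorem counitFirstTwo_comp_comulIdId :
    qb.counitFirstTwo.comp qb.comulIdId = qb.counitLeft (H ⊗[k] H) :=
  algHom_ext_threefold fun a b c => by simp [comulIdId, counitFirstTwo_assoc, counitLeft_comul]

theorem counitFirstTwo_comp_includeRight :
    qb.counitFirstTwo.comp includeRight = qb.counitLeft (H ⊗[k] H) :=
  algHom_ext_threefold fun a b c => by simp

theorem counitFirstTwo_comp_idComulId :
    qb.counitFirstTwo.comp qb.idComulId = qb.counitLeft (H ⊗[k] H) :=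
  algHom_ext_threefold fun a b c => by
    simp [idComulId, counitFirstTwo, counitLeft_assoc_tmul, counitLeft_comul]

theorem counitFirstTwo_comp_tmulOne :
    qb.counitFirstTwo.comp tmulOne = includeLeft.comp ((qb.counitLeft H).comp qb.counitMid) :=
  algHom_ext_threefold fun a b c => by simp [tmulOne, smul_tmul', mul_comm]

theorem counitLastTwo_comp_idIdComul : qb.counitLastTwo.comp qb.idIdComul = qb.counitLast :=
  algHom_ext_threefold fun a b c => by
    simp [idIdComul, counitLastTwo, counitRight_comul]

theorem counitLastTwo_comp_comulIdId :
    qb.counitLastTwo.comp qb.comulIdId = qb.comul.comp ((qb.counitRight H).comp qb.counitMid) :=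
  algHom_ext_threefold fun a b c => by simp [comulIdId, counitLastTwo_assoc, smul_smul]

theorem counitLastTwo_comp_includeRight :
    qb.counitLastTwo.comp includeRight = includeRight.comp ((qb.counitRight H).comp qb.counitMid) :=
  algHom_ext_threefold fun a b c => by simp [smul_smul]

theorem counitLastTwo_comp_idComulId : qb.counitLastTwo.comp qb.idComulId = qb.counitLast :=
  algHom_ext_threefold fun a b c => by
    simp [idComulId, counitLastTwo, counitRight_assoc_tmul, counitRight_comul]

theorem counitLastTwo_comp_tmulOne : qb.counitLastTwo.comp tmulOne = qb.counitLast :=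
  algHom_ext_threefold fun a b c => by simp [tmulOne]

/- Applying `ε ⊗ ε ⊗ id ⊗ id`, resp. `id ⊗ id ⊗ ε ⊗ ε`, to the pentagon shows that
`(ε ⊗ id ⊗ id) φ`, resp. `(id ⊗ id ⊗ ε) φ`, is an idempotent unit. -/
theorem counitLeft_assoc : qb.counitLeft (H ⊗[k] H) qb.assoc = 1 := by
  have h := congrArg qb.counitFirstTwo qb.pentagon'
  simp only [map_mul, ← AlgHom.comp_apply, counitFirstTwo_comp_idIdComul,
    counitFirstTwo_comp_comulIdId, counitFirstTwo_comp_includeRight, counitFirstTwo_comp_idComulId,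
    counitFirstTwo_comp_tmulOne] at h
  simp only [AlgHom.comp_apply, counitMid_assoc, map_one, one_mul, mul_one] at h
  exact (IsIdempotentElem.iff_eq_one_of_isUnit (qb.isUnit_assoc.map _)).1 h.symm

theorem counitLast_assoc : qb.counitLast qb.assoc = 1 := by
  have h := congrArg qb.counitLastTwo qb.pentagon'
  simp only [map_mul, ← AlgHom.comp_apply, counitLastTwo_comp_idIdComul,
    counitLastTwo_comp_comulIdId, counitLastTwo_comp_includeRight, counitLastTwo_comp_idComulId,
    counitLastTwo_comp_tmulOne] at h
  simp only [AlgHom.comp_apply, counitMid_assoc, map_one, one_mul, mul_one] at h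
  exact (IsIdempotentElem.iff_eq_one_of_isUnit (qb.isUnit_assoc.map _)).1 h.symm

theorem counitMid_assocInv : qb.counitMid qb.assocInv = 1 :=
  qb.map_assocInv_eq_one qb.counitMid_assoc

theorem counitLast_assocInv : qb.counitLast qb.assocInv = 1 :=
  qb.map_assocInv_eq_one qb.counitLast_assoc

theorem idIdComul_assocInv_mul_includeRight_assoc :
    qb.idIdComul qb.assocInv * Algebra.TensorProduct.includeRight qb.assoc
      = qb.comulIdId qb.assoc * (tmulOne qb.assocInv * qb.idComulId qb.assocInv) :=
  mul_eq_mul_of_mul_eq_mul_mul (qb.map_assocInv_mul_map_assoc _)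
    (qb.map_assoc_mul_map_assocInv _) (qb.map_assoc_mul_map_assocInv _) qb.pentagon'

end QuasiBialgebra

namespace QuasiHopf

variable (qh : QuasiHopf k H)

open Algebra.TensorProduct

theorem sum_antipode_mul_alpha_mul {h : H} {n : ℕ} {a b : Fin n → H}
    (hh : qh.comul h = ∑ i, a i ⊗ₜ[k] b i) :
    ∑ i, qh.antipode (a i) * qh.alpha * b i = qh.counit h • qh.alpha := by
  simpa [hh, map_sum] using qh.isQuasiAntipode.antipode_left h

theorem sum_mul_beta_mul_antipode {h : H} {n : ℕ} {a b : Fin n → H}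
    (hh : qh.comul h = ∑ i, a i ⊗ₜ[k] b i) :
    ∑ i, a i * (qh.beta * qh.antipode (b i)) = qh.counit h • qh.beta := by
  simpa [hh, map_sum] using qh.isQuasiAntipode.antipode_right h

theorem sum_assocInv_antipode {n : ℕ} {x y z : Fin n → H}
    (hφ : qh.assocInv = ∑ i, x i ⊗ₜ[k] (y i ⊗ₜ[k] z i)) :
    ∑ i, qh.antipode (x i) * qh.alpha * (y i * (qh.beta * qh.antipode (z i))) = 1 := by
  simpa [hφ, map_sum, mul_assoc] using qh.isQuasiAntipode.assocInv_antipode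

theorem sum_antipode_mul_alpha_mul_mul {h : H} {n : ℕ} {a b : Fin n → H}
    (hh : qh.comul h = ∑ i, a i ⊗ₜ[k] b i) (X Z : H) :
    ∑ i, X * (qh.antipode (a i) * (qh.alpha * (b i * Z))) = qh.counit h • (X * (qh.alpha * Z)) := by
  calc _ = X * (∑ i, qh.antipode (a i) * qh.alpha * b i) * Z := by
        simp [Finset.mul_sum, Finset.sum_mul, mul_assoc]
    _ = _ := by rw [qh.sum_antipode_mul_alpha_mul hh, mul_smul_comm, smul_mul_assoc, mul_assoc]

theorem sum_mul_beta_mul_antipode_mul {h : H} {n : ℕ} {a b : Fin n → H}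
    (hh : qh.comul h = ∑ i, a i ⊗ₜ[k] b i) (X Z : H) :
    ∑ i, X * a i * qh.beta * qh.antipode (b i) * Z = qh.counit h • (X * qh.beta * Z) := by
  calc _ = X * (∑ i, a i * (qh.beta * qh.antipode (b i))) * Z := by
        simp [Finset.mul_sum, Finset.sum_mul, mul_assoc]
    _ = _ := by rw [qh.sum_mul_beta_mul_antipode hh, mul_smul_comm, smul_mul_assoc]

noncomputable def antipodeContract : H ⊗[k] (H ⊗[k] H) →ₗ[k] H ⊗[k] H :=
  LinearMap.rTensor H
      (LinearMap.mul' k H ∘ₗ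
        TensorProduct.map (LinearMap.mulRight k qh.alpha ∘ₗ qh.antipode) LinearMap.id)
    ∘ₗ (TensorProduct.assoc k H H H).symm.toLinearMap

@[simp] theorem antipodeContract_tmul (x y z : H) :
    qh.antipodeContract (x ⊗ₜ (y ⊗ₜ z)) = (qh.antipode x * qh.alpha * y) ⊗ₜ z := by
  simp [antipodeContract]

theorem drinfeldW_eq : drinfeldW qh = qh.antipodeContract qh.assocInv := rfl

theorem drinfeldCan_tmul (g h : H) :
    drinfeldCan qh (g ⊗ₜ[k] h) = (g ⊗ₜ[k] (1 : H)) * (drinfeldW qh * qh.comul h) := by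
  obtain ⟨m, u, v, huv⟩ := exists_fin_sum_tmul (drinfeldW qh * qh.comul h)
  simp [drinfeldCan, huv, tmul_sum, Finset.mul_sum]

theorem drinfeldCanInv_tmul (g h : H) :
    drinfeldCanInv qh (g ⊗ₜ[k] h) = (g ⊗ₜ[k] (1 : H)) * drinfeldInvAux qh h := by
  obtain ⟨m, u, v, huv⟩ := exists_fin_sum_tmul (drinfeldInvAux qh h)
  simp [drinfeldCanInv, huv, tmul_sum, Finset.mul_sum]

theorem drinfeldCanInv_tmul_one_mul (g : H) (s : H ⊗[k] H) :
    drinfeldCanInv qh ((g ⊗ₜ[k] (1 : H)) * s) = (g ⊗ₜ[k] (1 : H)) * drinfeldCanInv qh s := by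
  induction s using TensorProduct.induction_on with
  | zero => simp
  | tmul x y => simp [drinfeldCanInv_tmul, ← mul_assoc]
  | add s t hs ht => simp only [mul_add, map_add, hs, ht]

theorem drinfeldInvAux_eq_sum {ι : Type*} {s : Finset ι} {n : ℕ} {φ₁ φ₂ φ₃ : Fin n → H} {h : H}
    {h₁ h₂ : ι → H} (hφ : qh.assoc = ∑ i, φ₁ i ⊗ₜ[k] (φ₂ i ⊗ₜ[k] φ₃ i))
    (hh : qh.comul h = ∑ j ∈ s, h₁ j ⊗ₜ[k] h₂ j) :
    drinfeldInvAux qh h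
      = ∑ j ∈ s, ∑ i, (φ₁ i * qh.beta * qh.antipode (h₁ j * φ₂ i)) ⊗ₜ[k] (h₂ j * φ₃ i) := by
  simp [drinfeldInvAux, hh, hφ, Finset.mul_sum]

noncomputable def betaAntipodeMap (d : H) : H ⊗[k] (H ⊗[k] H) →ₗ[k] H ⊗[k] H :=
  LinearMap.rTensor H (LinearMap.mul' k H)
    ∘ₗ (TensorProduct.assoc k H H H).symm.toLinearMap
    ∘ₗ LinearMap.lTensor H
        (TensorProduct.map (LinearMap.mulLeft k qh.beta ∘ₗ qh.antipode) LinearMap.id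
          ∘ₗ LinearMap.mulLeft k (qh.comul d))

theorem betaAntipodeMap_tmul {d : H} {n : ℕ} {d₁ d₂ : Fin n → H}
    (hd : qh.comul d = ∑ m, d₁ m ⊗ₜ[k] d₂ m) (u v w : H) :
    qh.betaAntipodeMap d (u ⊗ₜ[k] (v ⊗ₜ[k] w))
      = ∑ m, (u * (qh.beta * qh.antipode (d₁ m * v))) ⊗ₜ[k] (d₂ m * w) := by
  simp [betaAntipodeMap, hd, Finset.sum_mul, tmul_sum]

theorem betaAntipodeMap_idComul_mul_assoc (d : H) (s : H ⊗[k] H) :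
    qh.betaAntipodeMap d ((Algebra.TensorProduct.map (AlgHom.id k H) qh.comul) s * qh.assoc)
      = drinfeldCanInv qh (((1 : H) ⊗ₜ[k] d) * s) := by
  induction s using TensorProduct.induction_on with
  | zero => simp
  | add x y hx hy => rw [map_add, add_mul, map_add, hx, hy, mul_add, map_add]
  | tmul p q =>
    obtain ⟨n, φ₁, φ₂, φ₃, hφ⟩ := exists_fin_sum_tmul_tmul qh.assoc
    obtain ⟨L, q₁, q₂, hq⟩ := exists_fin_sum_tmul (qh.comul q)
    obtain ⟨M, d₁, d₂, hd⟩ := exists_fin_sum_tmul (qh.comul d)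
    have hdq : qh.comul (d * q)
        = ∑ jl : Fin M × Fin L, (d₁ jl.1 * q₁ jl.2) ⊗ₜ[k] (d₂ jl.1 * q₂ jl.2) := by
      rw [map_mul, hd, hq, Finset.sum_mul_sum, ← Finset.univ_product_univ, Finset.sum_product]
      simp only [Algebra.TensorProduct.tmul_mul_tmul]
    have hR : drinfeldCanInv qh (((1 : H) ⊗ₜ[k] d) * (p ⊗ₜ[k] q))
        = ∑ m, ∑ l, ∑ i, (p * (φ₁ i * qh.beta * qh.antipode (d₁ m * q₁ l * φ₂ i)))
              ⊗ₜ[k] (d₂ m * q₂ l * φ₃ i) := by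
      rw [Algebra.TensorProduct.tmul_mul_tmul, one_mul, drinfeldCanInv_tmul,
        drinfeldInvAux_eq_sum qh hφ hdq, ← Finset.univ_product_univ, Finset.sum_product]
      simp [Finset.mul_sum]
    rw [hR, Finset.sum_comm]
    simp [hq, hφ, tmul_sum, Finset.sum_mul_sum, betaAntipodeMap_tmul qh hd, mul_assoc]
    refine Finset.sum_congr rfl fun _ _ => ?_
    rw [Finset.sum_comm]

theorem betaAntipodeMap_assoc_mul_comulId (d : H) (s : H ⊗[k] H) :
    qh.betaAntipodeMap d (qh.assoc * (Algebra.TensorProduct.assoc k k k H H H)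
        ((Algebra.TensorProduct.map qh.comul (AlgHom.id k H)) s))
      = drinfeldInvAux qh d * ((1 : H) ⊗ₜ[k] qh.counitLeft H s) := by
  induction s using TensorProduct.induction_on with
  | zero => simp
  | add x y hx hy => simp only [map_add, mul_add, hx, hy, tmul_add]
  | tmul p q =>
    obtain ⟨n, φ₁, φ₂, φ₃, hφ⟩ := exists_fin_sum_tmul_tmul qh.assoc
    obtain ⟨L, p₁, p₂, hp⟩ := exists_fin_sum_tmul (qh.comul p)
    obtain ⟨M, d₁, d₂, hd⟩ := exists_fin_sum_tmul (qh.comul d)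
    have hcounit : ∀ X Z Y : H,
        ∑ l, (X * (p₁ l * (qh.beta * qh.antipode (p₂ l))) * Z) ⊗ₜ[k] Y
          = qh.counit p • ((X * qh.beta * Z) ⊗ₜ[k] Y) := by
      intro X Z Y
      rw [← sum_tmul, ← Finset.sum_mul, ← Finset.mul_sum, qh.sum_mul_beta_mul_antipode hp,
        mul_smul_comm, smul_mul_assoc, smul_tmul']
    have hR : drinfeldInvAux qh d * ((1 : H) ⊗ₜ[k] qh.counitLeft H (p ⊗ₜ[k] q))
        = qh.counit p • ∑ m, ∑ i,
            (φ₁ i * qh.beta * qh.antipode (d₁ m * φ₂ i)) ⊗ₜ[k] (d₂ m * (φ₃ i * q)) := by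
      simp [drinfeldInvAux_eq_sum qh hφ hd, Finset.sum_mul, mul_assoc]
    rw [hR]
    simp [hp, hφ, sum_tmul, Finset.sum_mul_sum, betaAntipodeMap_tmul qh hd, Finset.smul_sum]
    conv_rhs => rw [Finset.sum_comm]
    refine Finset.sum_congr rfl fun i _ => ?_
    rw [Finset.sum_comm]
    refine Finset.sum_congr rfl fun m _ => ?_
    rw [← hcounit]
    refine Finset.sum_congr rfl fun l _ => ?_
    rw [← mul_assoc (d₁ m), qh.isQuasiAntipode.map_mul]
    simp only [mul_assoc]

theorem drinfeldCanInv_one_tmul_mul_comul (d c : H) :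
    drinfeldCanInv qh (((1 : H) ⊗ₜ[k] d) * qh.comul c)
      = drinfeldInvAux qh d * ((1 : H) ⊗ₜ[k] c) := by
  rw [← betaAntipodeMap_idComul_mul_assoc, qh.quasi_coassoc, betaAntipodeMap_assoc_mul_comulId,
    qh.counitLeft_comul]

noncomputable def antipodeContract₄ : H ⊗[k] (H ⊗[k] (H ⊗[k] H)) →ₗ[k] H ⊗[k] H :=
  LinearMap.rTensor H (LinearMap.mul' k H)
    ∘ₗ (TensorProduct.assoc k H H H).symm.toLinearMap
    ∘ₗ TensorProduct.map (LinearMap.mulRight k qh.alpha ∘ₗ qh.antipode)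
        (LinearMap.rTensor H (LinearMap.mul' k H)
          ∘ₗ (TensorProduct.assoc k H H H).symm.toLinearMap
          ∘ₗ LinearMap.lTensor H
              (TensorProduct.map (LinearMap.mulLeft k qh.beta ∘ₗ qh.antipode) LinearMap.id))

@[simp] theorem antipodeContract₄_tmul (a b c e : H) :
    qh.antipodeContract₄ (a ⊗ₜ[k] (b ⊗ₜ[k] (c ⊗ₜ[k] e)))
      = (qh.antipode a * qh.alpha * (b * (qh.beta * qh.antipode c))) ⊗ₜ[k] e := by
  simp [antipodeContract₄]

theorem drinfeldCanInv_antipodeContract (s : H ⊗[k] (H ⊗[k] H)) :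
    drinfeldCanInv qh (qh.antipodeContract s)
      = qh.antipodeContract₄ (qh.idIdComul s * Algebra.TensorProduct.includeRight qh.assoc) := by
  induction s using TensorProduct.induction_on_threefold with
  | zero => simp [zero_mul']
  | add u v hu hv => simp only [map_add, add_mul', hu, hv]
  | tmul x y z =>
    obtain ⟨n, φ₁, φ₂, φ₃, hφ⟩ := exists_fin_sum_tmul_tmul qh.assoc
    obtain ⟨L, z₁, z₂, hz⟩ := exists_fin_sum_tmul (qh.comul z)
    simp [drinfeldCanInv_tmul, drinfeldInvAux_eq_sum qh hφ hz, QuasiBialgebra.idIdComul, hz, hφ,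
      tmul_sum, Finset.mul_sum, sum_mul', mul_sum', mul_assoc]
    rw [Finset.sum_comm]

theorem antipodeContract₄_comulIdId_mul (s : H ⊗[k] (H ⊗[k] H))
    (W : H ⊗[k] (H ⊗[k] (H ⊗[k] H))) :
    qh.antipodeContract₄ (qh.comulIdId s * W)
      = qh.antipodeContract₄ (((1 : H) ⊗ₜ[k] ((1 : H) ⊗ₜ[k] qh.counitLeft (H ⊗[k] H) s)) * W) := by
  induction s using TensorProduct.induction_on_threefold with
  | zero => simp [zero_mul']
  | add u v hu hv => simp only [map_add, tmul_add, add_mul', hu, hv]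
  | tmul x y z =>
    induction W using TensorProduct.induction_on_fourfold with
    | zero => simp [mul_zero']
    | add V V' hV hV' => simp only [mul_add', map_add, hV, hV']
    | tmul w₁ w₂ w₃ w₄ =>
      obtain ⟨n, x₁, x₂, hx⟩ := exists_fin_sum_tmul (qh.comul x)
      simp [QuasiBialgebra.comulIdId, hx, sum_tmul, sum_mul', smul_mul_assoc',
        qh.isQuasiAntipode.map_mul, mul_assoc]
      rw [← sum_tmul, sum_antipode_mul_alpha_mul_mul qh hx, smul_tmul']

theorem antipodeContract₄_mul_idComulId (W : H ⊗[k] (H ⊗[k] (H ⊗[k] H)))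
    (s : H ⊗[k] (H ⊗[k] H)) :
    qh.antipodeContract₄ (W * qh.idComulId s)
      = qh.antipodeContract₄ (W * Algebra.TensorProduct.map (AlgHom.id k H)
          ((includeRight (A := H)).comp (includeRight (A := H))) (qh.counitMid s)) := by
  induction s using TensorProduct.induction_on_threefold with
  | zero => simp [mul_zero']
  | add u v hu hv => simp only [map_add, mul_add', hu, hv]
  | tmul u v w =>
    induction W using TensorProduct.induction_on_fourfold with
    | zero => simp [zero_mul']
    | add V V' hV hV' => simp only [add_mul', map_add, hV, hV']
    | tmul w₁ w₂ w₃ w₄ =>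
      obtain ⟨n, v₁, v₂, hv⟩ := exists_fin_sum_tmul (qh.comul v)
      simp [QuasiBialgebra.idComulId, hv, sum_tmul, tmul_sum, mul_sum', mul_smul_comm',
        qh.isQuasiAntipode.map_mul, ← mul_assoc]
      rw [← sum_tmul, sum_mul_beta_mul_antipode_mul qh hv, smul_tmul']

theorem antipodeContract₄_tmulOne_assocInv :
    qh.antipodeContract₄ (QuasiBialgebra.tmulOne qh.assocInv) = 1 := by
  obtain ⟨n, x, y, z, hφ⟩ := exists_fin_sum_tmul_tmul qh.assocInv
  simp [QuasiBialgebra.tmulOne, hφ]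
  rw [← sum_tmul, qh.sum_assocInv_antipode hφ, one_def]

/- Contract the rearranged pentagon
`(id ⊗ id ⊗ Δ) φ⁻¹ · (1 ⊗ φ) = (Δ ⊗ id ⊗ id) φ · (φ⁻¹ ⊗ 1) · (id ⊗ Δ ⊗ id) φ⁻¹`
with `antipodeContract₄`: the left side becomes `T' w`, while on the right the antipode axioms
absorb the two outer factors. -/
theorem drinfeldCanInv_drinfeldW : drinfeldCanInv qh (drinfeldW qh) = 1 := by
  rw [drinfeldW_eq, drinfeldCanInv_antipodeContract,
    QuasiBialgebra.idIdComul_assocInv_mul_includeRight_assoc, antipodeContract₄_comulIdId_mul,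
    QuasiBialgebra.counitLeft_assoc, ← one_def, ← one_def, one_mul',
    antipodeContract₄_mul_idComulId, QuasiBialgebra.counitMid_assocInv, map_one, mul_one',
    antipodeContract₄_tmulOne_assocInv]

theorem drinfeldCanInv_drinfeldW_mul_comul (h : H) :
    drinfeldCanInv qh (drinfeldW qh * qh.comul h) = (1 : H) ⊗ₜ[k] h := by
  obtain ⟨m, u, v, huv⟩ := exists_fin_sum_tmul (drinfeldW qh)
  have hw : ∑ i, (u i ⊗ₜ[k] (1 : H)) * drinfeldInvAux qh (v i) = 1 := by
    simpa [huv, drinfeldCanInv_tmul] using qh.drinfeldCanInv_drinfeldW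
  calc drinfeldCanInv qh (drinfeldW qh * qh.comul h)
      = ∑ i, drinfeldCanInv qh ((u i ⊗ₜ[k] (1 : H)) * (((1 : H) ⊗ₜ[k] v i) * qh.comul h)) := by
        simp [huv, Finset.sum_mul, ← mul_assoc]
    _ = ∑ i, (u i ⊗ₜ[k] (1 : H)) * drinfeldInvAux qh (v i) * ((1 : H) ⊗ₜ[k] h) := by
        simp [drinfeldCanInv_tmul_one_mul, drinfeldCanInv_one_tmul_mul_comul, mul_assoc]
    _ = (1 : H) ⊗ₜ[k] h := by rw [← Finset.sum_mul, hw, one_mul]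

theorem leftInverse_drinfeldCanInv :
    Function.LeftInverse (drinfeldCanInv qh) (drinfeldCan qh) := by
  intro t
  induction t using TensorProduct.induction_on with
  | zero => simp
  | add x y hx hy => rw [map_add, map_add, hx, hy]
  | tmul g h =>
    rw [drinfeldCan_tmul, drinfeldCanInv_tmul_one_mul, drinfeldCanInv_drinfeldW_mul_comul,
      tmul_mul_tmul, mul_one, one_mul]

theorem counitRight_drinfeldInvAux (b : H) :
    qh.counitRight H (drinfeldInvAux qh b) = qh.beta * qh.antipode b := by
  set B := LinearMap.mul' k H ∘ₗ TensorProduct.map (LinearMap.mulRight k qh.beta) qh.antipode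
  have hB : ∀ t, qh.counitRight H (LinearMap.rTensor H B ((TensorProduct.assoc k H H H).symm t))
      = B (qh.counitLast t) := by
    intro t
    induction t using TensorProduct.induction_on_threefold with
    | zero => simp
    | add u v hu hv => simp only [map_add, hu, hv]
    | tmul x y z => simp [B]
  have hP : drinfeldInvAux qh b = LinearMap.rTensor H B
      ((TensorProduct.assoc k H H H).symm (((1 : H) ⊗ₜ qh.comul b) * qh.assoc)) := rfl
  rw [hP, hB, map_mul, qh.counitLast_assoc, mul_one, QuasiBialgebra.counitLast_tmul,
    qh.counitRight_comul]
  simp [B]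

theorem counitRight_drinfeldW : qh.counitRight H (drinfeldW qh) = qh.alpha := by
  set A := LinearMap.mul' k H ∘ₗ
    TensorProduct.map (LinearMap.mulRight k qh.alpha ∘ₗ qh.antipode) LinearMap.id
  have hA : ∀ t, qh.counitRight H (qh.antipodeContract t) = A (qh.counitLast t) := by
    intro t
    induction t using TensorProduct.induction_on_threefold with
    | zero => simp
    | add u v hu hv => simp only [map_add, hu, hv]
    | tmul x y z => simp [A]
  rw [drinfeldW_eq, hA, qh.counitLast_assocInv, one_def]
  simp [A, qh.isQuasiAntipode.map_one]

theorem mul'_lTensor_drinfeldW (x : H) :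
    LinearMap.mul' k H (LinearMap.lTensor H
        (LinearMap.mulLeft k qh.beta ∘ₗ qh.antipode ∘ₗ LinearMap.mulLeft k x) (drinfeldW qh))
      = qh.antipode x := by
  set E := LinearMap.mul' k H ∘ₗ TensorProduct.map (LinearMap.mulRight k qh.alpha ∘ₗ qh.antipode)
    (LinearMap.mul' k H ∘ₗ TensorProduct.map (LinearMap.mulRight k qh.beta) qh.antipode)
  have hE : ∀ t, LinearMap.mul' k H (LinearMap.lTensor H
        (LinearMap.mulLeft k qh.beta ∘ₗ qh.antipode ∘ₗ LinearMap.mulLeft k x)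
        (qh.antipodeContract t)) = E t * qh.antipode x := by
    intro t
    induction t using TensorProduct.induction_on_threefold with
    | zero => simp
    | add u v hu hv => simp only [map_add, hu, hv, add_mul]
    | tmul x y z => simp [E, qh.isQuasiAntipode.map_mul, mul_assoc]
  rw [drinfeldW_eq, hE, show E qh.assocInv = 1 from qh.isQuasiAntipode.assocInv_antipode,
    one_mul]

end QuasiHopf

namespace Subalgebra

variable (K : Subalgebra k H)

def tensorSquare : Submodule k (H ⊗[k] H) :=
  LinearMap.range (TensorProduct.map K.val.toLinearMap K.val.toLinearMap)

instance [FiniteDimensional k K] : FiniteDimensional k K.tensorSquare :=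
  LinearMap.finiteDimensional_range _

variable {K}

theorem tmul_mem_tensorSquare {a b : H} (ha : a ∈ K) (hb : b ∈ K) :
    a ⊗ₜ[k] b ∈ K.tensorSquare :=
  ⟨⟨a, ha⟩ ⊗ₜ ⟨b, hb⟩, rfl⟩

theorem mul_mem_tensorSquare {x y : H ⊗[k] H} (hx : x ∈ K.tensorSquare)
    (hy : y ∈ K.tensorSquare) : x * y ∈ K.tensorSquare := by
  obtain ⟨x, rfl⟩ := hx
  obtain ⟨y, rfl⟩ := hy
  exact ⟨x * y, map_mul (Algebra.TensorProduct.map K.val K.val) x y⟩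

theorem mul'_lTensor_mem {f : H →ₗ[k] H} (hf : ∀ a ∈ K, f a ∈ K) {t : H ⊗[k] H}
    (ht : t ∈ K.tensorSquare) : LinearMap.mul' k H (LinearMap.lTensor H f t) ∈ K := by
  obtain ⟨t, rfl⟩ := ht
  induction t using TensorProduct.induction_on with
  | zero => simp
  | tmul a b => simpa using K.mul_mem a.2 (hf b b.2)
  | add x y hx hy => simpa using K.add_mem hx hy

theorem counitRight_mem (qb : QuasiBialgebra k H) {t : H ⊗[k] H} (ht : t ∈ K.tensorSquare) :
    qb.counitRight H t ∈ K := by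
  obtain ⟨t, rfl⟩ := ht
  induction t using TensorProduct.induction_on with
  | zero => simp
  | tmul a b => simpa using K.smul_mem a.2 _
  | add x y hx hy => simpa using K.add_mem hx hy

theorem drinfeldCan_mem_tensorSquare (qh : QuasiHopf k H)
    (hΔ : ∀ x ∈ K, qh.comul x ∈ K.tensorSquare) (hw : drinfeldW qh ∈ K.tensorSquare)
    {t : H ⊗[k] H} (ht : t ∈ K.tensorSquare) : drinfeldCan qh t ∈ K.tensorSquare := by
  obtain ⟨t, rfl⟩ := ht
  induction t using TensorProduct.induction_on with
  | zero => simp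
  | tmul a b =>
    simpa [qh.drinfeldCan_tmul] using mul_mem_tensorSquare
      (tmul_mem_tensorSquare a.2 K.one_mem) (mul_mem_tensorSquare hw (hΔ b b.2))
  | add x y hx hy => simpa using K.tensorSquare.add_mem hx hy

end Subalgebra

theorem subquasibialgebra_isQuasiHopfSub_general (qh : QuasiHopf k H) (K : Subalgebra k H)
    [FiniteDimensional k K]
    (hΔ : ∀ x ∈ K, qh.comul x ∈
      LinearMap.range (TensorProduct.map K.val.toLinearMap K.val.toLinearMap))
    (hw : drinfeldW qh ∈ LinearMap.range (TensorProduct.map K.val.toLinearMap K.val.toLinearMap)) :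
    (∀ x ∈ K, qh.antipode x ∈ K) ∧ qh.alpha ∈ K ∧ qh.beta ∈ K := by
  have hP : ∀ b ∈ K, drinfeldInvAux qh b ∈ K.tensorSquare := fun b hb => by
    have h := Submodule.mem_of_leftInverse qh.leftInverse_drinfeldCanInv
      (fun _ => Subalgebra.drinfeldCan_mem_tensorSquare qh hΔ hw)
      (Subalgebra.tmul_mem_tensorSquare K.one_mem hb)
    rwa [qh.drinfeldCanInv_tmul, ← Algebra.TensorProduct.one_def, one_mul] at h
  have hβS : ∀ b ∈ K, qh.beta * qh.antipode b ∈ K := fun b hb => by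
    simpa [qh.counitRight_drinfeldInvAux] using
      Subalgebra.counitRight_mem qh.toQuasiBialgebra (hP b hb)
  refine ⟨fun x hx => ?_, ?_, ?_⟩
  · rw [← qh.mul'_lTensor_drinfeldW x]
    exact Subalgebra.mul'_lTensor_mem (fun a ha => hβS _ (K.mul_mem hx ha)) hw
  · rw [← qh.counitRight_drinfeldW]
    exact Subalgebra.counitRight_mem qh.toQuasiBialgebra hw
  · simpa [qh.isQuasiAntipode.map_one] using hβS 1 K.one_mem

/-- A finite-dimensional subquasibialgebra `K ⊆ H` of a quasi-Hopf algebra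
with `S(φ⁻¹⁽¹⁾)·α·φ⁻¹⁽²⁾ ⊗ φ⁻¹⁽³⁾ ∈ K⊗K` is a quasi-Hopf subalgebra:
`S(K) ⊆ K` and `α, β ∈ K`. -/
theorem subquasibialgebra_isQuasiHopfSub (qh : QuasiHopf k H) (K : Subalgebra k H)
    [FiniteDimensional k K]
    (hΔ : ∀ x ∈ K, qh.comul x ∈
      LinearMap.range (TensorProduct.map K.val.toLinearMap K.val.toLinearMap))
    (hφ : qh.assoc ∈ LinearMap.range (TensorProduct.map K.val.toLinearMap
      (TensorProduct.map K.val.toLinearMap K.val.toLinearMap)))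
    (hw : drinfeldW qh ∈ LinearMap.range (TensorProduct.map K.val.toLinearMap K.val.toLinearMap)) :
    (∀ x ∈ K, qh.antipode x ∈ K) ∧ qh.alpha ∈ K ∧ qh.beta ∈ K :=
  subquasibialgebra_isQuasiHopfSub_general qh K hΔ hw
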